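/- arXiv:1307.0135 — 4 statements merged into one kernel-verified Lean document; each statement's English description precedes it below -/
import Mathlib

section
/- Let m ≥ 1 and let I ⊆ ℤ/mℤ be an interval (the injective reduction mod m of an interval of consecutive integers). For any integer a with 0 ≤ a < m, the symmetric difference of I and its translate a+I (viewing a as an element of ℤ/mℤ with representative of absolute value ≤ m/2) satisfies |I △ (a+I)| ≤ 2·min(a, m−a). -/
/-!
Lift the translation by `a` to a translation of integers by a representative `s` of `a` with
`|s| = min a (m - a)`. The integer interval `[c, d]` and its shift `[c + s, d + s]` differ in at
most `|s|` points at each end, and the symmetric difference of their images mod `m` lies in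
the image of theirs.
-/

open Finset
open scoped symmDiff

/-- An interval in `ZMod m`: the injective reduction mod `m` of an interval of
consecutive integers. -/
def IsInterval {m : ℕ} (I : Finset (ZMod m)) : Prop :=
  ∃ a b : ℤ, Set.InjOn (Int.cast : ℤ → ZMod m) (Finset.Icc a b : Set ℤ) ∧
    I = (Finset.Icc a b).image (Int.cast : ℤ → ZMod m)

theorem Finset.image_symmDiff_subset {α β : Type*} [DecidableEq α] [DecidableEq β]
    (f : α → β) (s t : Finset α) : s.image f ∆ t.image f ⊆ (s ∆ t).image f := by
  intro y
  simp only [mem_symmDiff, mem_image]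
  rintro (⟨⟨x, hx, rfl⟩, hnt⟩ | ⟨⟨x, hx, rfl⟩, hns⟩)
  · exact ⟨x, Or.inl ⟨hx, fun ht => hnt ⟨x, ht, rfl⟩⟩, rfl⟩
  · exact ⟨x, Or.inr ⟨hx, fun hs => hns ⟨x, hs, rfl⟩⟩, rfl⟩

theorem Finset.Icc_sdiff_Icc_subset {α : Type*} [LinearOrder α] [LocallyFiniteOrder α]
    (a b c d : α) : Icc a b \ Icc c d ⊆ Ico a c ∪ Ioc d b := by
  intro x
  simp only [mem_sdiff, mem_Icc, mem_union, mem_Ico, mem_Ioc]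
  intro ⟨⟨hax, hxb⟩, hx⟩
  by_cases hcx : c ≤ x
  · exact Or.inr ⟨lt_of_not_ge fun hxd => hx ⟨hcx, hxd⟩, hxb⟩
  · exact Or.inl ⟨hax, lt_of_not_ge hcx⟩

theorem Int.card_Icc_sdiff_Icc_add_le (c d s : ℤ) :
    #(Icc c d \ Icc (c + s) (d + s)) ≤ s.natAbs := by
  calc #(Icc c d \ Icc (c + s) (d + s))
      ≤ #(Ico c (c + s) ∪ Ioc (d + s) d) := card_le_card (Icc_sdiff_Icc_subset _ _ _ _)
    _ ≤ #(Ico c (c + s)) + #(Ioc (d + s) d) := card_union_le _ _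
    _ = s.natAbs := by rw [Int.card_Ico, Int.card_Ioc]; omega

theorem Int.card_symmDiff_Icc_add_le (c d s : ℤ) :
    #(Icc c d ∆ Icc (c + s) (d + s)) ≤ 2 * s.natAbs := by
  have hback : Icc (c + s) (d + s) \ Icc c d
      = Icc (c + s) (d + s) \ Icc (c + s + -s) (d + s + -s) := by simp
  calc #(Icc c d ∆ Icc (c + s) (d + s))
      ≤ #(Icc c d \ Icc (c + s) (d + s)) + #(Icc (c + s) (d + s) \ Icc c d) := by
        rw [symmDiff_def]; exact card_union_le _ _
    _ ≤ s.natAbs + (-s).natAbs := by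
        rw [hback]
        exact add_le_add (card_Icc_sdiff_Icc_add_le c d s) (card_Icc_sdiff_Icc_add_le _ _ _)
    _ = 2 * s.natAbs := by rw [Int.natAbs_neg, two_mul]

theorem Int.image_add_left_image_cast_Icc {R : Type*} [AddGroupWithOne R] [DecidableEq R]
    (c d s : ℤ) :
    ((Icc c d).image (Int.cast : ℤ → R)).image ((s : R) + ·)
      = (Icc (c + s) (d + s)).image (Int.cast : ℤ → R) := by
  rw [← image_add_right_Icc, image_image, image_image]
  refine image_congr fun x _ => ?_
  simp [add_comm]

theorem ZMod.exists_intCast_eq_natAbs_eq_min {m a : ℕ} (ha : a < m) :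
    ∃ s : ℤ, (s : ZMod m) = a ∧ s.natAbs = min a (m - a) := by
  rcases le_total a (m - a) with h | h
  · exact ⟨a, Int.cast_natCast a, by omega⟩
  · exact ⟨(a : ℤ) - m, by simp, by omega⟩

theorem symmDiff_translate_interval_general (m : ℕ) (I : Finset (ZMod m))
    (hI : IsInterval I) (a : ℕ) (ha : a < m) :
    (I ∆ (I.image (fun x => (a : ZMod m) + x))).card ≤ 2 * min a (m - a) := by
  obtain ⟨c, d, -, rfl⟩ := hI
  obtain ⟨s, hsa, hs⟩ := ZMod.exists_intCast_eq_natAbs_eq_min ha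
  rw [← hsa, Int.image_add_left_image_cast_Icc, ← hs]
  calc _ ≤ #((Icc c d ∆ Icc (c + s) (d + s)).image (Int.cast : ℤ → ZMod m)) :=
        card_le_card (image_symmDiff_subset _ _ _)
    _ ≤ #(Icc c d ∆ Icc (c + s) (d + s)) := card_image_le
    _ ≤ 2 * s.natAbs := Int.card_symmDiff_Icc_add_le c d s

theorem symmDiff_translate_interval (m : ℕ) (hm : 1 ≤ m) (I : Finset (ZMod m))
    (hI : IsInterval I) (a : ℕ) (ha : a < m) :
    (I ∆ (I.image (fun x => (a : ZMod m) + x))).card ≤ 2 * min a (m - a) :=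
  symmDiff_translate_interval_general m I hI a ha
end

section
/- Let m ≥ 1, let φ : ℤ/mℤ → ℂ, let I ⊆ ℤ/mℤ be an interval, and let D ⊆ ℤ/mℤ be any subset. Then |∑_{n∈I} φ(n)|³ ≤ 8·‖φ‖_∞ · ( |I|·|D|·‖φ‖₂² + |I|²·max_{a∉D} |C(φ,a)| + (1/4)·‖φ‖_∞²·|I|² ), where C(φ,a) = ∑_{x} φ(x)·conj(φ(x+a)). Equivalently, |∑_{n∈I} φ(n)| ≤ 2‖φ‖_∞^{1/3}·( |D|^{1/3}|I|^{1/3}‖φ‖₂^{2/3} + |I|^{2/3}·max_{a∉D}|C(φ,a)|^{1/3} + (2/3)|I|^{2/3}‖φ‖_∞^{2/3} ). -/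
open Finset

/-- The additive autocorrelation of `φ` at shift `a`. -/
noncomputable def corr {m : ℕ} [NeZero m] (φ : ZMod m → ℂ) (a : ZMod m) : ℂ :=
  ∑ x : ZMod m, φ x * (starRingEnd ℂ) (φ (x + a))

/-!
Write `W u = ∑_{t<L} φ (u + t)` for the window sums of length `L = |I|`, so that the sum over `I`
is `W a` for some `a`. Expanding the square, `∑_u |W u|² = ∑_{t,t'<L} C(φ, t' - t)`; at most
`L |D|` of the pairs have `t' - t ∈ D`, where `|C| ≤ ‖φ‖₂²`, so this energy is at
most `L |D| ‖φ‖₂² + L² M`. On the other hand, sliding the window one step changes `W` by at most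
`2ν`, so with `s = |W a|` the `K` distinct windows `W (a + j)`, `j < K`, contribute at least
`K s² - 2νsK²` to the energy. Choosing `K` nearest to `s / 4ν` turns this into
`s³ ≤ 8ν · energy + 2ν³L²`.
-/

lemma sum_range_natCast_le_sq_div_two (K : ℕ) : ∑ j ∈ range K, (j : ℝ) ≤ K ^ 2 / 2 := by
  have h : (∑ j ∈ range K, j) * 2 ≤ K ^ 2 := by
    rw [sum_range_id_mul_two, sq]; exact Nat.mul_le_mul_left K (Nat.sub_le K 1)
  have h' := (Nat.cast_le (α := ℝ)).2 h
  push_cast at h'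
  linarith

section Window

variable {G E : Type*} [AddCommMonoidWithOne G]

def windowSum [AddCommMonoid E] (φ : G → E) (L : ℕ) (u : G) : E :=
  ∑ t ∈ range L, φ (u + t)

lemma windowSum_add_one [AddCommGroup E] (φ : G → E) (L : ℕ) (u : G) :
    windowSum φ L (u + 1) = windowSum φ L u + φ (u + L) - φ u := by
  rw [eq_sub_iff_add_eq, windowSum, windowSum, ← sum_range_succ, sum_range_succ']
  simp only [Nat.cast_add, Nat.cast_one, Nat.cast_zero, add_zero, add_right_comm _ (1 : G),
    add_assoc]

variable [SeminormedAddCommGroup E] {φ : G → E} {ν : ℝ}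

lemma norm_windowSum_le_norm_windowSum_add_one (hν : ∀ x, ‖φ x‖ ≤ ν) (L : ℕ) (u : G) :
    ‖windowSum φ L u‖ ≤ ‖windowSum φ L (u + 1)‖ + 2 * ν := by
  have h : windowSum φ L u = windowSum φ L (u + 1) - φ (u + L) + φ u := by
    rw [windowSum_add_one]; abel
  rw [h]
  linarith [norm_add_le (windowSum φ L (u + 1) - φ (u + L)) (φ u),
    norm_sub_le (windowSum φ L (u + 1)) (φ (u + L)), hν (u + L), hν u]

lemma norm_windowSum_le_norm_windowSum_add (hν : ∀ x, ‖φ x‖ ≤ ν) (L : ℕ) (u : G) (j : ℕ) :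
    ‖windowSum φ L u‖ ≤ ‖windowSum φ L (u + j)‖ + 2 * ν * j := by
  induction j with
  | zero => simp
  | succ j ih =>
    have := norm_windowSum_le_norm_windowSum_add_one hν L (u + j)
    rw [Nat.cast_succ, ← add_assoc]
    push_cast
    linarith

lemma mul_sq_sub_le_sum_sq_norm_windowSum (hν : ∀ x, ‖φ x‖ ≤ ν) (L K : ℕ) (u : G) :
    K * ‖windowSum φ L u‖ ^ 2 - 2 * ν * ‖windowSum φ L u‖ * K ^ 2 ≤
      ∑ j ∈ range K, ‖windowSum φ L (u + j)‖ ^ 2 := by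
  set s := ‖windowSum φ L u‖
  have hν0 : 0 ≤ ν := (norm_nonneg _).trans (hν 0)
  have hs0 : 0 ≤ s := norm_nonneg _
  have hterm : ∀ j : ℕ, s ^ 2 - 4 * ν * s * j ≤ ‖windowSum φ L (u + j)‖ ^ 2 := by
    intro j
    have hslide : s - 2 * ν * j ≤ ‖windowSum φ L (u + j)‖ := by
      linarith [norm_windowSum_le_norm_windowSum_add hν L u j]
    have hνj : 0 ≤ ν * j := mul_nonneg hν0 j.cast_nonneg
    rcases le_total s (2 * ν * j) with h | h
    · nlinarith [mul_le_mul_of_nonneg_left h hs0]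
    · nlinarith [pow_le_pow_left₀ (sub_nonneg.2 h) hslide 2]
  calc (K : ℝ) * s ^ 2 - 2 * ν * s * K ^ 2
      ≤ K * s ^ 2 - 4 * ν * s * ∑ j ∈ range K, (j : ℝ) := by
        have := sum_range_natCast_le_sq_div_two K
        have : 0 ≤ ν * s := mul_nonneg hν0 hs0
        nlinarith
    _ = ∑ j ∈ range K, (s ^ 2 - 4 * ν * s * j) := by
        rw [sum_sub_distrib, sum_const, card_range, nsmul_eq_mul, mul_sum]
    _ ≤ ∑ j ∈ range K, ‖windowSum φ L (u + j)‖ ^ 2 := sum_le_sum fun j _ => hterm j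

end Window

lemma IsInterval.exists_sum_eq_windowSum {m : ℕ} {E : Type*} [AddCommMonoid E]
    {I : Finset (ZMod m)} (hI : IsInterval I) (φ : ZMod m → E) :
    ∃ a, ∑ n ∈ I, φ n = windowSum φ #I a := by
  obtain ⟨a, b, hinj, rfl⟩ := hI
  refine ⟨a, ?_⟩
  rw [sum_image hinj, card_image_of_injOn hinj, Int.card_Icc, Int.Icc_eq_finset_map, sum_map]
  simp [windowSum]

lemma card_filter_natCast_sub_mem_le {m L : ℕ} (hL : L ≤ m) (D : Finset (ZMod m)) (t : ZMod m) :
    #{t' ∈ range L | ((t' : ℕ) : ZMod m) - t ∈ D} ≤ #D := by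
  refine card_le_card_of_injOn (fun t' : ℕ => (t' : ZMod m) - t)
    (fun t' ht' => (mem_filter.1 ht').2)
    fun i hi j hj hij => CharP.natCast_injOn_Iio (ZMod m) m ?_ ?_ (sub_left_inj.1 hij)
  · simpa using (mem_range.1 (mem_filter.1 hi).1).trans_le hL
  · simpa using (mem_range.1 (mem_filter.1 hj).1).trans_le hL

section Autocorrelation

variable {m : ℕ} [NeZero m]

lemma sum_range_add_natCast_le_sum {f : ZMod m → ℝ} (hf : ∀ x, 0 ≤ f x) {K : ℕ} (hK : K ≤ m)
    (a : ZMod m) : ∑ j ∈ range K, f (a + j) ≤ ∑ x, f x := by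
  have hinj : Set.InjOn (fun j : ℕ => a + (j : ZMod m)) (range K) := fun i hi j hj hij =>
    CharP.natCast_injOn_Iio (ZMod m) m (by simpa using (mem_range.1 hi).trans_le hK)
      (by simpa using (mem_range.1 hj).trans_le hK) (add_left_cancel hij)
  rw [← sum_image (g := fun j : ℕ => a + (j : ZMod m)) hinj]
  exact sum_le_univ_sum_of_nonneg hf

variable (φ : ZMod m → ℂ)

lemma norm_corr_le (a : ZMod m) : ‖corr φ a‖ ≤ ∑ x, ‖φ x‖ ^ 2 := calc
  ‖corr φ a‖ ≤ ∑ x, ‖φ x‖ * ‖φ (x + a)‖ := by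
    refine (norm_sum_le _ _).trans_eq (sum_congr rfl fun x _ => ?_)
    rw [norm_mul, Complex.norm_conj]
  _ ≤ ∑ x, (‖φ x‖ ^ 2 + ‖φ (x + a)‖ ^ 2) / 2 :=
    sum_le_sum fun x _ => by linarith [two_mul_le_add_sq ‖φ x‖ ‖φ (x + a)‖]
  _ = ∑ x, ‖φ x‖ ^ 2 := by
    rw [← sum_div, sum_add_distrib,
      Fintype.sum_equiv (Equiv.addRight a) (fun x => ‖φ (x + a)‖ ^ 2) (fun x => ‖φ x‖ ^ 2)
        fun _ => rfl]
    ring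

lemma sum_sq_norm_windowSum_eq (L : ℕ) :
    ((∑ u, ‖windowSum φ L u‖ ^ 2 : ℝ) : ℂ) =
      ∑ t ∈ range L, ∑ t' ∈ range L, corr φ (t' - t) := by
  have hshift : ∀ t t' : ZMod m,
      ∑ u, φ (u + t) * (starRingEnd ℂ) (φ (u + t')) = corr φ (t' - t) := fun t t' =>
    Fintype.sum_equiv (Equiv.addRight t) _ _ fun u => by
      rw [Equiv.coe_addRight, add_add_sub_cancel]
  simp_rw [Complex.ofReal_sum, Complex.ofReal_pow, ← Complex.mul_conj', windowSum, map_sum,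
    sum_mul_sum]
  rw [sum_comm]
  refine sum_congr rfl fun t _ => ?_
  rw [sum_comm]
  exact sum_congr rfl fun t' _ => hshift _ _

variable {L : ℕ} (hL : L ≤ m) {D : Finset (ZMod m)} {M : ℝ} (hM0 : 0 ≤ M)
  (hM : ∀ a, a ∉ D → ‖corr φ a‖ ≤ M)
include hL hM0 hM

lemma sum_norm_corr_le (t : ZMod m) :
    ∑ t' ∈ range L, ‖corr φ (t' - t)‖ ≤ #D * ∑ x, ‖φ x‖ ^ 2 + L * M := by
  rw [← sum_filter_add_sum_filter_not _ (fun t' : ℕ => (t' : ZMod m) - t ∈ D)]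
  gcongr
  · refine (sum_le_card_nsmul _ _ _ fun t' _ => norm_corr_le φ _).trans ?_
    rw [nsmul_eq_mul]
    gcongr
    exact_mod_cast card_filter_natCast_sub_mem_le hL D t
  · refine (sum_le_card_nsmul _ _ _ fun t' ht' => hM _ (mem_filter.1 ht').2).trans ?_
    rw [nsmul_eq_mul]
    gcongr
    simpa using card_filter_le (range L) _

lemma sum_sq_norm_windowSum_le :
    ∑ u, ‖windowSum φ L u‖ ^ 2 ≤ L * #D * ∑ x, ‖φ x‖ ^ 2 + L ^ 2 * M := by
  have h := congrArg norm (sum_sq_norm_windowSum_eq φ L)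
  rw [Complex.norm_real, Real.norm_of_nonneg (sum_nonneg fun _ _ => sq_nonneg _)] at h
  rw [h]
  refine (norm_sum_le _ _).trans ((sum_le_sum fun (t : ℕ) _ => (norm_sum_le _ _).trans
    (sum_norm_corr_le φ hL hM0 hM (t : ZMod m))).trans_eq ?_)
  rw [sum_const, card_range, nsmul_eq_mul]
  ring

end Autocorrelation

lemma exists_nat_abs_sub_le_half {x : ℝ} (hx : 0 ≤ x) : ∃ K : ℕ, |x - K| ≤ 1 / 2 :=
  ⟨⌊x + 1 / 2⌋₊, abs_sub_le_iff.2 ⟨by linarith [Nat.lt_floor_add_one (x + 1 / 2)],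
    by linarith [Nat.floor_le (by linarith : 0 ≤ x + 1 / 2)]⟩⟩

lemma pow_three_le_of_forall_le {s ν B : ℝ} {L : ℕ} (hs : 0 ≤ s) (hν : 0 ≤ ν)
    (hsL : s ≤ ν * L) (hB : ∀ K ≤ L, K * s ^ 2 - 2 * ν * s * K ^ 2 ≤ B) :
    s ^ 3 ≤ 8 * ν * B + 2 * ν ^ 3 * L ^ 2 := by
  rcases le_or_gt s (2 * ν) with hs2 | hs2
  · have hB0 : 0 ≤ B := by simpa using hB 0 L.zero_le
    nlinarith [pow_le_pow_left₀ hs hsL 2, mul_nonneg hν hB0]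
  have hν0 : 0 < ν := by nlinarith
  have hL : (2 : ℝ) ≤ L := le_of_mul_le_mul_left (by linarith) hν0
  obtain ⟨θ, rfl⟩ : ∃ θ, s = 4 * ν * θ := ⟨s / (4 * ν), by field_simp⟩
  have hθL : 4 * θ ≤ L := le_of_mul_le_mul_left (by linarith) hν0
  obtain ⟨K, hK⟩ := exists_nat_abs_sub_le_half (by nlinarith : 0 ≤ θ)
  have hKL : K ≤ L := by
    exact_mod_cast (show (K : ℝ) ≤ L by linarith [(abs_sub_le_iff.1 hK).2])
  have hround : (4 * ν * θ - 4 * ν * K) ^ 2 ≤ 4 * ν ^ 2 := by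
    have : (θ - K) ^ 2 ≤ (1 / 2) ^ 2 := sq_le_sq' (abs_le.1 hK).1 (abs_le.1 hK).2
    nlinarith
  calc (4 * ν * θ) ^ 3
      = 8 * ν * (K * (4 * ν * θ) ^ 2 - 2 * ν * (4 * ν * θ) * K ^ 2)
        + 4 * ν * θ * (4 * ν * θ - 4 * ν * K) ^ 2 := by ring
    _ ≤ 8 * ν * B + 4 * ν ^ 2 * (ν * L) := by
        have := hB K hKL
        nlinarith [mul_le_mul_of_nonneg_left hround hs]
    _ ≤ 8 * ν * B + 2 * ν ^ 3 * L ^ 2 := by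
        nlinarith [mul_le_mul_of_nonneg_left hL (by positivity : 0 ≤ 2 * ν ^ 3 * L)]

/-- Sliding-sum bound (Theorem 2 of the paper): for any interval `I` and any set `D`,
with `ν` the sup norm of `φ` and `M` a bound for `|corr φ a|` off `D`. -/
theorem sliding_sum_bound (m : ℕ) [NeZero m] (φ : ZMod m → ℂ)
    (I : Finset (ZMod m)) (hI : IsInterval I) (D : Finset (ZMod m))
    (ν : ℝ) (hν : ∀ x, ‖φ x‖ ≤ ν)
    (M : ℝ) (hM0 : 0 ≤ M) (hM : ∀ a : ZMod m, a ∉ D → ‖corr φ a‖ ≤ M) :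
    (‖∑ n ∈ I, φ n‖) ^ 3 ≤
      8 * ν * ((I.card : ℝ) * D.card * (∑ x : ZMod m, (‖φ x‖) ^ 2)
        + (I.card : ℝ) ^ 2 * M + (1 / 4) * ν ^ 2 * (I.card : ℝ) ^ 2) := by
  obtain ⟨a, ha⟩ := hI.exists_sum_eq_windowSum φ
  have hIm : #I ≤ m := by simpa using card_le_univ I
  have hsI : ‖∑ n ∈ I, φ n‖ ≤ ν * #I := by
    simpa [mul_comm] using norm_sum_le_of_le I fun n _ => hν n
  have h := pow_three_le_of_forall_le (norm_nonneg _) ((norm_nonneg _).trans (hν 0)) hsI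
    fun K hK => by
      rw [ha]
      exact (mul_sq_sub_le_sum_sq_norm_windowSum hν _ K a).trans
        ((sum_range_add_natCast_le_sum (fun _ => sq_nonneg _) (hK.trans hIm) a).trans
          (sum_sq_norm_windowSum_le φ hIm hM0 hM))
  linarith
end

section
/- Let m ≥ 1, φ : ℤ/mℤ → ℂ with ‖φ‖_∞ = ν > 0, I an interval in ℤ/mℤ, and S = |∑_{n∈I} φ(n)|. For every ε > 0, if S/ν is large enough in terms of ε, then ∑_{a ∈ ℤ/mℤ} |∑_{n ∈ a+I} φ(n)|² ≥ (1/3 − ε)·S³/ν. -/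
/-!
Shifting the window `a + I` to `a + 1 + I` lets one term of `φ` in and one out, so the sliding
sum `F a = ∑ n ∈ I, φ (n + a)` moves by at most `2ν` per step and `‖F (±j)‖ ≥ S - 2jν`.
Since `S ≤ #I ν ≤ m ν`, the `2K ≈ S / ν` translates `-K, …, K - 1` are distinct in `ZMod m`.
Summing the squared lower bounds is a Riemann sum for `∫ (S - 2ν|t|)₊² dt = S³ / (3ν)`, with an
error `O(S² + ν²)`, which is at most `ε S³ / ν` once `S / ν` is large.
-/

open Finset

theorem Int.sum_Ico_sub {M : Type*} [AddCommGroup M] (f : ℤ → M) {p q : ℤ} (hpq : p ≤ q) :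
    ∑ j ∈ Ico p q, (f (j + 1) - f j) = f q - f p := by
  induction q, hpq using Int.leInduction with
  | base => simp
  | succ q hpq ih =>
    rw [← insert_Ico_right_eq_Ico_add_one_of_not_isMax hpq (not_isMax q),
      sum_insert right_notMem_Ico, ih]
    abel

def slidingSum {m : ℕ} {E : Type*} [AddCommMonoid E] (I : Finset (ZMod m)) (φ : ZMod m → E)
    (a : ZMod m) : E :=
  ∑ n ∈ I, φ (n + a)

theorem IsInterval.norm_slidingSum_add_one_sub_le {m : ℕ} {E : Type*} [SeminormedAddCommGroup E]
    {I : Finset (ZMod m)} (hI : IsInterval I) {φ : ZMod m → E} {ν : ℝ} (hφ : ∀ x, ‖φ x‖ ≤ ν)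
    (a : ZMod m) : ‖slidingSum I φ (a + 1) - slidingSum I φ a‖ ≤ 2 * ν := by
  obtain ⟨p, q, hinj, rfl⟩ := hI
  rcases le_or_gt p q with hpq | hqp
  · have htel :
        ∑ j ∈ Icc p q, (φ (j + (a + 1)) - φ (j + a)) = φ ((q + 1 : ℤ) + a) - φ (p + a) := by
      rw [← Ico_add_one_right_eq_Icc, ← Int.sum_Ico_sub (fun j : ℤ ↦ φ (j + a)) (by omega)]
      refine sum_congr rfl fun j _ ↦ ?_
      push_cast
      rw [add_right_comm, add_assoc]
    rw [slidingSum, slidingSum, sum_image hinj, sum_image hinj, ← sum_sub_distrib, htel, two_mul]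
    exact (norm_sub_le _ _).trans (add_le_add (hφ _) (hφ _))
  · simp [slidingSum, Icc_eq_empty_of_lt hqp, (norm_nonneg _).trans (hφ 0)]

section Lipschitz

variable {G E : Type*} [AddGroupWithOne G] [SeminormedAddCommGroup E] {f : G → E} {L : ℝ}

theorem norm_add_natCast_sub_le (hf : ∀ a, ‖f (a + 1) - f a‖ ≤ L) (a : G) (k : ℕ) :
    ‖f (a + k) - f a‖ ≤ k * L := by
  induction k with
  | zero => simp
  | succ k ih =>
    calc ‖f (a + (k + 1 : ℕ)) - f a‖
        ≤ ‖f (a + k + 1) - f (a + k)‖ + ‖f (a + k) - f a‖ := by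
          rw [Nat.cast_succ, ← add_assoc]; exact norm_sub_le_norm_sub_add_norm_sub _ _ _
      _ ≤ L + k * L := add_le_add (hf _) ih
      _ = (k + 1 : ℕ) * L := by push_cast; ring

theorem norm_sub_mul_le_norm_add_natCast (hf : ∀ a, ‖f (a + 1) - f a‖ ≤ L) (a : G) (k : ℕ) :
    ‖f a‖ - k * L ≤ ‖f (a + k)‖ := by
  have h := norm_add_natCast_sub_le hf a k
  rw [norm_sub_rev] at h
  linarith [norm_sub_norm_le (f a) (f (a + k))]

theorem norm_sub_mul_le_norm_sub_natCast (hf : ∀ a, ‖f (a + 1) - f a‖ ≤ L) (a : G) (k : ℕ) :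
    ‖f a‖ - k * L ≤ ‖f (a - k)‖ := by
  have h := norm_add_natCast_sub_le hf (a - k) k
  rw [sub_add_cancel] at h
  linarith [norm_sub_norm_le (f a) (f (a - k))]

end Lipschitz

theorem ZMod.sum_range_add_sum_range_neg_le_sum {m : ℕ} [NeZero m] {M : Type*}
    [AddCommMonoid M] [PartialOrder M] [IsOrderedAddMonoid M] {g : ZMod m → M}
    (hg : ∀ a, 0 ≤ g a) {K : ℕ} (hK : 2 * K ≤ m) :
    ∑ j ∈ range K, g j + ∑ j ∈ range K, g (-(j + 1)) ≤ ∑ a, g a := by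
  have hinj : Set.InjOn (Nat.cast : ℕ → ZMod m) (range (2 * K)) := fun i hi j hj hij ↦ by
    simp only [coe_range, Set.mem_Iio] at hi hj
    rw [← ZMod.val_natCast_of_lt (hi.trans_le hK), hij, ZMod.val_natCast_of_lt (hj.trans_le hK)]
  calc ∑ j ∈ range K, g j + ∑ j ∈ range K, g (-(j + 1))
      = ∑ j ∈ range (2 * K), g (j - K) := by
        rw [two_mul, sum_range_add, add_comm, ← sum_range_reflect]
        congr 1
        · refine sum_congr rfl fun j hj ↦ ?_
          rw [show K - 1 - j = K - (j + 1) by omega, Nat.cast_sub (by simp at hj; omega)]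
          push_cast; ring_nf
        · simp
    _ = ∑ a ∈ (range (2 * K)).image Nat.cast, g (a - K) :=
        (sum_image (f := fun a ↦ g (a - K)) hinj).symm
    _ ≤ ∑ a, g (a - K) := sum_le_univ_sum_of_nonneg fun _ ↦ hg _
    _ = ∑ a, g a := (Equiv.subRight _).sum_comp g

theorem cube_sub_cube_le_sum_sq {S L : ℝ} (hL : 0 ≤ L) {K : ℕ} (hK : K * L ≤ S) :
    S ^ 3 - (S - K * L) ^ 3 ≤ 3 * L * ∑ j ∈ range K, (S - j * L) ^ 2 := by
  induction K with
  | zero => simp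
  | succ K ih =>
    push_cast at hK ⊢
    -- `u³ - (u - L)³ = 3Lu² - L²(3u - L)` with `u = S - KL ≥ L`
    have hstep : (S - K * L) ^ 3 - (S - (K + 1) * L) ^ 3 ≤ 3 * L * (S - K * L) ^ 2 := by
      nlinarith [mul_nonneg (mul_nonneg hL hL) (by linarith : 0 ≤ S - K * L - L)]
    rw [sum_range_succ, mul_add]
    linarith [ih (by nlinarith)]

theorem ZMod.cube_sub_cube_le_sum_norm_sq {m : ℕ} [NeZero m] {E : Type*}
    [SeminormedAddCommGroup E] {f : ZMod m → E} {L : ℝ} (hL : 0 < L)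
    (hf : ∀ a, ‖f (a + 1) - f a‖ ≤ L) (hm : 2 * ‖f 0‖ ≤ m * L) :
    2 * (‖f 0‖ ^ 3 - L ^ 3) ≤ 3 * L * (∑ a, ‖f a‖ ^ 2 + ‖f 0‖ ^ 2) := by
  set S := ‖f 0‖
  set K := ⌊S / L⌋₊
  have hKS : K * L ≤ S := (le_div_iff₀ hL).mp (Nat.floor_le (by positivity))
  have hSK : S < (K + 1) * L := (div_lt_iff₀ hL).mp (Nat.lt_floor_add_one _)
  have hKm : 2 * K ≤ m := by
    have : (2 * K : ℝ) * L ≤ m * L := by linarith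
    exact_mod_cast le_of_mul_le_mul_right this hL
  have hright : ∑ j ∈ range K, (S - j * L) ^ 2 ≤ ∑ j ∈ range K, ‖f j‖ ^ 2 := by
    refine sum_le_sum fun j hj ↦ pow_le_pow_left₀ ?_
      (by simpa using norm_sub_mul_le_norm_add_natCast hf 0 j) 2
    have : (j : ℝ) ≤ K := by exact_mod_cast (mem_range.mp hj).le
    nlinarith
  have hleft :
      ∑ j ∈ range K, (S - (j + 1) * L) ^ 2 ≤ ∑ j ∈ range K, ‖f (-(j + 1))‖ ^ 2 := by
    refine sum_le_sum fun j hj ↦ pow_le_pow_left₀ ?_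
      (by simpa using norm_sub_mul_le_norm_sub_natCast hf 0 (j + 1)) 2
    have : (j : ℝ) + 1 ≤ K := by exact_mod_cast mem_range.mp hj
    nlinarith
  have hshift :
      ∑ j ∈ range K, (S - j * L) ^ 2 ≤ ∑ j ∈ range K, (S - (j + 1) * L) ^ 2 + S ^ 2 := by
    have := sum_range_succ' (fun j : ℕ ↦ (S - j * L) ^ 2) K
    rw [sum_range_succ] at this
    push_cast at this
    linarith [sq_nonneg (S - K * L)]
  have htel := cube_sub_cube_le_sum_sq hL.le hKS
  have hcube : (S - K * L) ^ 3 ≤ L ^ 3 := pow_le_pow_left₀ (by linarith) (by linarith) 3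
  have hcount := ZMod.sum_range_add_sum_range_neg_le_sum (g := fun a ↦ ‖f a‖ ^ 2)
    (fun _ ↦ by positivity) hKm
  have hsum : 2 * ∑ j ∈ range K, (S - j * L) ^ 2 ≤ ∑ a, ‖f a‖ ^ 2 + S ^ 2 := by linarith
  calc 2 * (S ^ 3 - L ^ 3) ≤ 3 * L * (2 * ∑ j ∈ range K, (S - j * L) ^ 2) := by linarith
    _ ≤ _ := by gcongr

/-- Lemma (lm-interval): the sliding-sum lower bound over translates of an interval. -/
theorem sliding_sum_lower_bound (ε : ℝ) (hε : 0 < ε) :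
    ∃ A : ℝ, ∀ (m : ℕ) [NeZero m] (φ : ZMod m → ℂ) (ν : ℝ),
      (∀ x, ‖φ x‖ ≤ ν) → (∃ x, ‖φ x‖ = ν) → 0 < ν →
      ∀ I : Finset (ZMod m), IsInterval I →
      A ≤ ‖∑ n ∈ I, φ n‖ / ν →
      (1 / 3 - ε) * (‖∑ n ∈ I, φ n‖) ^ 3 / ν ≤
        ∑ a : ZMod m, (‖∑ n ∈ I, φ (n + a)‖) ^ 2 := by
  refine ⟨2 + 2 / ε, fun m _ φ ν hφ _ hν I hI hA ↦ ?_⟩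
  set S := ‖∑ n ∈ I, φ n‖ with hSdef
  have hSm : 2 * S ≤ m * (2 * ν) := by
    have hcard : (#I : ℝ) ≤ m := by exact_mod_cast (card_le_univ I).trans (ZMod.card m).le
    have := norm_sum_le_of_le I fun n _ ↦ hφ n
    rw [sum_const, nsmul_eq_mul] at this
    nlinarith
  have hkey := ZMod.cube_sub_cube_le_sum_norm_sq (f := slidingSum I φ) (by positivity)
    (hI.norm_slidingSum_add_one_sub_le hφ) (by simpa [slidingSum] using hSm)
  simp only [slidingSum, add_zero, ← hSdef] at hkey
  have hS : 2 * ν + 2 * ν / ε ≤ S := by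
    simpa [add_mul, div_mul_eq_mul_div] using (le_div_iff₀ hν).mp hA
  have hνS : 2 * ν ≤ S := by linarith [div_pos (mul_pos two_pos hν) hε]
  have hεS : 2 * ν ≤ ε * S := (div_le_iff₀' hε).mp (by linarith [hν])
  -- by `hkey` it remains to see `8ν³ + 3νS² ≤ 3εS³`
  rw [div_le_iff₀ hν]
  nlinarith [mul_le_mul_of_nonneg_left hεS (sq_nonneg S),
    mul_le_mul hνS hνS (by positivity) (by positivity)]
end

section
/- Let p be prime, g a primitive root mod p, h ∈ 𝔽_p^×, and φ(n) = e(h·g^n/p) on ℤ/(p−1)ℤ. Then for every subset B ⊆ ℤ/(p−1)ℤ, ∑_{a ∈ ℤ/(p−1)ℤ} |∑_{n ∈ B} φ(n+a)|² = p·|B| − |B|². -/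
/-!
Expanding the squares, the left side is `∑_{n, m ∈ B} R(n - m)`, where `R` is the
autocorrelation of `φ`. Since `b ↦ g^b` enumerates `𝔽_p^×`, `R(d)` is the sum of
`e(h(g^d - 1)u/p)` over `u ∈ 𝔽_p^×`: this is `p - 1` for `d = 0` and `-1` otherwise, because a
nontrivial additive character sums to `0` over `𝔽_p`. Hence the left side is
`(p - 1)|B| - (|B|² - |B|)`.
-/

open Finset

/-- The additive character `t ↦ e(t/p) = exp(2πi·t/p)` on `ZMod p`. -/
noncomputable def eAdd (p : ℕ) (t : ZMod p) : ℂ :=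
  Complex.exp (2 * Real.pi * Complex.I * (t.val : ℂ) / p)

open ComplexConjugate

section Autocorrelation

variable {G 𝕜 : Type*} [AddCommGroup G] [Fintype G] [RCLike 𝕜]

def autocorrelation (φ : G → 𝕜) (d : G) : 𝕜 :=
  ∑ b, φ (b + d) * conj (φ b)

lemma sum_translate_mul_conj_eq_autocorrelation (φ : G → 𝕜) (n m : G) :
    ∑ a, φ (n + a) * conj (φ (m + a)) = autocorrelation φ (n - m) :=
  Fintype.sum_equiv (Equiv.addLeft m) _ _ fun a => by
    rw [Equiv.coe_addLeft, show m + a + (n - m) = n + a by abel]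

lemma sum_norm_sq_sum_translate (φ : G → 𝕜) (B : Finset G) :
    ((∑ a, ‖∑ n ∈ B, φ (n + a)‖ ^ 2 : ℝ) : 𝕜) =
      ∑ n ∈ B, ∑ m ∈ B, autocorrelation φ (n - m) := by
  calc ((∑ a, ‖∑ n ∈ B, φ (n + a)‖ ^ 2 : ℝ) : 𝕜)
      = ∑ a, ∑ n ∈ B, ∑ m ∈ B, φ (n + a) * conj (φ (m + a)) := by
        push_cast
        simp_rw [← RCLike.mul_conj, map_sum, sum_mul_sum]
    _ = ∑ n ∈ B, ∑ m ∈ B, ∑ a, φ (n + a) * conj (φ (m + a)) := by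
        rw [sum_comm]
        exact sum_congr rfl fun n _ => sum_comm
    _ = ∑ n ∈ B, ∑ m ∈ B, autocorrelation φ (n - m) := by
        simp_rw [sum_translate_mul_conj_eq_autocorrelation]

end Autocorrelation

section PowVal

variable {M G : Type*} [Monoid M] [Group G] {n : ℕ} [NeZero n]

lemma pow_val_add {x : M} (hx : orderOf x = n) (a b : ZMod n) :
    x ^ (a + b).val = x ^ a.val * x ^ b.val := by
  rw [← pow_add, ← pow_mod_orderOf x (a.val + b.val), hx, ZMod.val_add]

variable {g : G}

lemma pow_val_injective (hg : orderOf g = n) : Function.Injective fun a : ZMod n => g ^ a.val := by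
  intro a b hab
  rw [pow_inj_mod, hg, Nat.mod_eq_of_lt a.val_lt, Nat.mod_eq_of_lt b.val_lt] at hab
  exact ZMod.val_injective n hab

lemma pow_val_eq_one_iff (hg : orderOf g = n) {a : ZMod n} : g ^ a.val = 1 ↔ a = 0 := by
  simpa using (pow_val_injective hg).eq_iff (b := 0)

lemma sum_pow_val {A : Type*} [AddCommMonoid A] [Fintype G] (hg : orderOf g = n)
    (hcard : Fintype.card G = n) (f : G → A) : ∑ a : ZMod n, f (g ^ a.val) = ∑ x, f x :=
  ((Fintype.bijective_iff_injective_and_card _).2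
    ⟨pow_val_injective hg, by rw [ZMod.card, hcard]⟩).sum_comp f

end PowVal

lemma sum_units_eq_sum_sub_zero {K M : Type*} [GroupWithZero K] [Fintype K] [Fintype Kˣ]
    [AddCommGroup M] (f : K → M) : ∑ u : Kˣ, f u = ∑ x, f x - f 0 := by
  classical
  rw [← sum_erase_add univ f (mem_univ 0), add_sub_cancel_right,
    sum_subtype (univ.erase 0) (p := (· ≠ 0)) (by simp)]
  exact Fintype.sum_equiv unitsEquivNeZero _ _ fun _ => rfl

lemma AddChar.sum_units_mulShift {F R : Type*} [Field F] [Fintype F] [DecidableEq F]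
    [CommRing R] [IsDomain R] {ψ : AddChar F R} (hψ : ψ.IsPrimitive) (t : F) :
    ∑ u : Fˣ, ψ (t * u) = (if t = 0 then (Fintype.card F : R) else 0) - 1 := by
  rw [sum_units_eq_sum_sub_zero (fun x => ψ (t * x)), mul_zero, AddChar.map_zero_eq_one]
  simp_rw [mul_comm t]
  rw [AddChar.sum_mulShift t hψ, Nat.cast_ite, Nat.cast_zero]

def geometricPhase {F 𝕜 : Type*} [Semiring F] [Monoid 𝕜] (ψ : AddChar F 𝕜) (h : F) (g : Fˣ)
    (n : ℕ) (k : ZMod n) : 𝕜 :=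
  ψ (h * (g : F) ^ k.val)

lemma autocorrelation_geometricPhase {F 𝕜 : Type*} [Field F] [Fintype F] [DecidableEq F]
    [RCLike 𝕜] {ψ : AddChar F 𝕜} (hψ : ψ.IsPrimitive) {n : ℕ} [NeZero n] {g : Fˣ}
    (hg : orderOf g = n) (hcard : Fintype.card Fˣ = n) {h : F} (hh : h ≠ 0) (d : ZMod n) :
    autocorrelation (geometricPhase ψ h g n) d =
      (if d = 0 then (Fintype.card F : 𝕜) else 0) - 1 := by
  have hterm : ∀ b : ZMod n, ψ (h * (g : F) ^ (b + d).val) * conj (ψ (h * (g : F) ^ b.val)) =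
      ψ (h * ((g : F) ^ d.val - 1) * ↑(g ^ b.val)) := by
    intro b
    rw [← AddChar.map_neg_eq_conj, ← AddChar.map_add_eq_mul, Units.val_pow_eq_pow_val,
      pow_val_add (orderOf_units.trans hg)]
    congr 1
    ring
  have hcoef : h * ((g : F) ^ d.val - 1) = 0 ↔ d = 0 := by
    rw [mul_eq_zero, sub_eq_zero, ← Units.val_pow_eq_pow_val, Units.val_eq_one,
      pow_val_eq_one_iff hg, or_iff_right hh]
  simp only [autocorrelation, geometricPhase, hterm]
  rw [sum_pow_val hg hcard (fun u : Fˣ => ψ (h * ((g : F) ^ d.val - 1) * u)),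
    AddChar.sum_units_mulShift hψ]
  simp only [hcoef]

lemma eAdd_eq_stdAddChar (p : ℕ) [NeZero p] (t : ZMod p) : eAdd p t = ZMod.stdAddChar t := by
  rw [ZMod.stdAddChar_apply, ZMod.toCircle_apply, eAdd]

theorem sliding_sum_geometric_phase (p : ℕ) [Fact p.Prime] [NeZero (p - 1)]
    (g : (ZMod p)ˣ) (hg : orderOf g = p - 1) (h : ZMod p) (hh : h ≠ 0)
    (B : Finset (ZMod (p - 1))) :
    ∑ a : ZMod (p - 1),
        ‖∑ n ∈ B, eAdd p (h * (g : ZMod p) ^ ((n + a).val))‖ ^ 2 =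
      (p : ℝ) * B.card - (B.card : ℝ) ^ 2 := by
  have hφ (k : ZMod (p - 1)) :
      eAdd p (h * (g : ZMod p) ^ k.val) = geometricPhase ZMod.stdAddChar h g (p - 1) k :=
    eAdd_eq_stdAddChar p _
  apply RCLike.ofReal_injective (K := ℂ)
  simp_rw [hφ]
  rw [sum_norm_sq_sum_translate]
  simp_rw [autocorrelation_geometricPhase (ZMod.isPrimitive_stdAddChar p) hg (ZMod.card_units p) hh,
    ZMod.card, sub_eq_zero, sum_sub_distrib, sum_ite_eq, sum_ite_mem, inter_self, sum_const,
    nsmul_eq_mul, mul_one]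
  push_cast
  ring
end
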